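/- Every rewriting sequence based on the reading rules (r1)–(r6) and merging rules (m1)–(m6) of the suspension calculus terminates; i.e., the relation ▷rm on well-formed suspension expressions is strongly normalizing. -/
import Mathlib


mutual
inductive STerm : Type
  | const : ℕ → STerm
  | var   : ℕ → STerm
  | app   : STerm → STerm → STerm
  | lam   : STerm → STerm
  | susp  : STerm → ℕ → ℕ → SEnv → STerm
inductive SEnv : Type
  | nil   : SEnv
  | cons  : STerm → ℕ → SEnv → SEnv
  | merge : SEnv → ℕ → ℕ → SEnv → SEnv
end

/-- Length of an environment. -/
def SEnv.len : SEnv → ℕ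
  | .nil => 0
  | .cons _ _ e => 1 + e.len
  | .merge e1 nl1 ol2 _ => e1.len + (ol2 - nl1)

/-- Level of an environment. -/
def SEnv.lev : SEnv → ℕ
  | .nil => 0
  | .cons _ n _ => n
  | .merge _ nl1 ol2 e2 => e2.lev + (nl1 - ol2)

mutual
/-- Well-formedness of suspension terms. -/
def STerm.wf : STerm → Prop
  | .const _ => True
  | .var _ => True
  | .app t1 t2 => t1.wf ∧ t2.wf
  | .lam t => t.wf
  | .susp t ol nl e => t.wf ∧ e.wf ∧ e.len = ol ∧ e.lev ≤ nl
/-- Well-formedness of suspension environments. -/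
def SEnv.wf : SEnv → Prop
  | .nil => True
  | .cons t n e => t.wf ∧ e.wf ∧ e.lev ≤ n
  | .merge e1 nl1 ol2 e2 => e1.wf ∧ e2.wf ∧ e2.len = ol2 ∧ e1.lev ≤ nl1
end

/-- A simple environment: no merged environments on the top spine. -/
def SEnv.simple : SEnv → Prop
  | .nil => True
  | .cons _ _ e => e.simple
  | .merge _ _ _ _ => False

mutual
/-- One step of the reading rules (r1)-(r6) and merging rules (m1)-(m6),
applied anywhere (compatible closure). -/
inductive StepT : STerm → STerm → Prop
  | r1 : ∀ (c ol nl : ℕ) (e : SEnv), StepT (.susp (.const c) ol nl e) (.const c)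
  | r2 : ∀ (i nl : ℕ), StepT (.susp (.var i) 0 nl .nil) (.var (i + nl))
  | r3 : ∀ (ol nl : ℕ) (t : STerm) (l : ℕ) (e : SEnv),
      StepT (.susp (.var 1) ol nl (.cons t l e)) (.susp t 0 (nl - l) .nil)
  | r4 : ∀ (i ol nl : ℕ) (t : STerm) (l : ℕ) (e : SEnv), 1 < i →
      StepT (.susp (.var i) ol nl (.cons t l e)) (.susp (.var (i - 1)) (ol - 1) nl e)
  | r5 : ∀ (t1 t2 : STerm) (ol nl : ℕ) (e : SEnv),
      StepT (.susp (.app t1 t2) ol nl e) (.app (.susp t1 ol nl e) (.susp t2 ol nl e))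
  | r6 : ∀ (t : STerm) (ol nl : ℕ) (e : SEnv),
      StepT (.susp (.lam t) ol nl e)
            (.lam (.susp t (ol + 1) (nl + 1) (.cons (.var 1) (nl + 1) e)))
  | m1 : ∀ (t : STerm) (ol1 nl1 : ℕ) (e1 : SEnv) (ol2 nl2 : ℕ) (e2 : SEnv),
      StepT (.susp (.susp t ol1 nl1 e1) ol2 nl2 e2)
            (.susp t (ol1 + (ol2 - nl1)) (nl2 + (nl1 - ol2)) (.merge e1 nl1 ol2 e2))
  | appL : ∀ (t1 t1' t2 : STerm), StepT t1 t1' → StepT (.app t1 t2) (.app t1' t2)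
  | appR : ∀ (t1 t2 t2' : STerm), StepT t2 t2' → StepT (.app t1 t2) (.app t1 t2')
  | lamC : ∀ (t t' : STerm), StepT t t' → StepT (.lam t) (.lam t')
  | suspT : ∀ (t t' : STerm) (ol nl : ℕ) (e : SEnv),
      StepT t t' → StepT (.susp t ol nl e) (.susp t' ol nl e)
  | suspE : ∀ (t : STerm) (ol nl : ℕ) (e e' : SEnv),
      StepE e e' → StepT (.susp t ol nl e) (.susp t ol nl e')
inductive StepE : SEnv → SEnv → Prop
  | m2 : ∀ (e1 : SEnv) (nl1 : ℕ), StepE (.merge e1 nl1 0 .nil) e1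
  | m3 : ∀ (ol2 : ℕ) (e2 : SEnv), StepE (.merge .nil 0 ol2 e2) e2
  | m4 : ∀ (nl1 ol2 : ℕ) (t : STerm) (l : ℕ) (e2 : SEnv), 1 ≤ nl1 →
      StepE (.merge .nil nl1 ol2 (.cons t l e2)) (.merge .nil (nl1 - 1) (ol2 - 1) e2)
  | m5 : ∀ (t : STerm) (n : ℕ) (e1 : SEnv) (nl1 ol2 : ℕ) (s : STerm) (l : ℕ) (e2 : SEnv),
      n < nl1 →
      StepE (.merge (.cons t n e1) nl1 ol2 (.cons s l e2))
            (.merge (.cons t n e1) (nl1 - 1) (ol2 - 1) e2)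
  | m6 : ∀ (t : STerm) (n : ℕ) (e1 : SEnv) (ol2 : ℕ) (s : STerm) (l : ℕ) (e2 : SEnv),
      StepE (.merge (.cons t n e1) n ol2 (.cons s l e2))
            (.cons (.susp t ol2 l (.cons s l e2)) (l + (n - ol2))
                   (.merge e1 n ol2 (.cons s l e2)))
  | consT : ∀ (t t' : STerm) (n : ℕ) (e : SEnv),
      StepT t t' → StepE (.cons t n e) (.cons t' n e)
  | consE : ∀ (t : STerm) (n : ℕ) (e e' : SEnv),
      StepE e e' → StepE (.cons t n e) (.cons t n e')
  | mergeL : ∀ (e1 e1' : SEnv) (nl1 ol2 : ℕ) (e2 : SEnv),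
      StepE e1 e1' → StepE (.merge e1 nl1 ol2 e2) (.merge e1' nl1 ol2 e2)
  | mergeR : ∀ (e1 : SEnv) (nl1 ol2 : ℕ) (e2 e2' : SEnv),
      StepE e2 e2' → StepE (.merge e1 nl1 ol2 e2) (.merge e1 nl1 ol2 e2')
end

/-! ## Basic machinery -/

/-- Reversed step relation on terms: `RT y x` iff `x` steps to `y`. -/
def RT : STerm → STerm → Prop := fun y x => StepT x y
/-- Reversed step relation on environments. -/
def RE : SEnv → SEnv → Prop := fun y x => StepE x y

/-- Strong normalization for terms. -/
abbrev SNt (t : STerm) : Prop := Acc RT t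
/-- Strong normalization for environments. -/
abbrev SNe (e : SEnv) : Prop := Acc RE e

theorem var_nostep {i : ℕ} {y : STerm} (h : StepT (.var i) y) : False := by cases h
theorem const_nostep {c : ℕ} {y : STerm} (h : StepT (.const c) y) : False := by cases h
theorem nil_nostep {y : SEnv} (h : StepE .nil y) : False := by cases h

theorem snt_var (i : ℕ) : SNt (.var i) := ⟨_, fun _ h => absurd h var_nostep⟩
theorem snt_const (c : ℕ) : SNt (.const c) := ⟨_, fun _ h => absurd h const_nostep⟩
theorem sne_nil : SNe .nil := ⟨_, fun _ h => absurd h nil_nostep⟩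

/-- generic simulation lemma. -/
theorem acc_of_sim {α β : Sort*} {r : α → α → Prop} {s : β → β → Prop}
    (f : α → β) (h : ∀ a a', r a' a → s (f a') (f a)) :
    ∀ {b : β}, Acc s b → ∀ {a : α}, f a = b → Acc r a := by
  intro b hb
  induction hb with
  | intro x _ ih =>
    intro a heq
    subst heq
    exact ⟨_, fun y hy => ih _ (h _ _ hy) rfl⟩

theorem snt_app_left {t1 t2} (h : SNt (.app t1 t2)) : SNt t1 :=
  acc_of_sim (r := RT) (s := RT) (fun x => STerm.app x t2) (fun _ _ hs => StepT.appL _ _ _ hs) h rfl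
theorem snt_app_right {t1 t2} (h : SNt (.app t1 t2)) : SNt t2 :=
  acc_of_sim (r := RT) (s := RT) (fun x => STerm.app t1 x) (fun _ _ hs => StepT.appR _ _ _ hs) h rfl
theorem snt_lam_inv {t} (h : SNt (.lam t)) : SNt t :=
  acc_of_sim (r := RT) (s := RT) STerm.lam (fun _ _ hs => StepT.lamC _ _ hs) h rfl
theorem snt_susp_term {t ol nl e} (h : SNt (.susp t ol nl e)) : SNt t :=
  acc_of_sim (r := RT) (s := RT) (fun x => STerm.susp x ol nl e) (fun _ _ hs => StepT.suspT _ _ _ _ _ hs) h rfl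
theorem snt_susp_env {t ol nl e} (h : SNt (.susp t ol nl e)) : SNe e :=
  acc_of_sim (r := RE) (s := RT) (fun x => STerm.susp t ol nl x) (fun _ _ hs => StepT.suspE _ _ _ _ _ hs) h rfl
theorem sne_cons_term {t n e} (h : SNe (.cons t n e)) : SNt t :=
  acc_of_sim (r := RT) (s := RE) (fun x => SEnv.cons x n e) (fun _ _ hs => StepE.consT _ _ _ _ hs) h rfl
theorem sne_cons_env {t n e} (h : SNe (.cons t n e)) : SNe e :=
  acc_of_sim (r := RE) (s := RE) (fun x => SEnv.cons t n x) (fun _ _ hs => StepE.consE _ _ _ _ hs) h rfl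
theorem sne_merge_left {e1 nl1 ol2 e2} (h : SNe (.merge e1 nl1 ol2 e2)) : SNe e1 :=
  acc_of_sim (r := RE) (s := RE) (fun x => SEnv.merge x nl1 ol2 e2) (fun _ _ hs => StepE.mergeL _ _ _ _ _ hs) h rfl
theorem sne_merge_right {e1 nl1 ol2 e2} (h : SNe (.merge e1 nl1 ol2 e2)) : SNe e2 :=
  acc_of_sim (r := RE) (s := RE) (fun x => SEnv.merge e1 nl1 ol2 x) (fun _ _ hs => StepE.mergeR _ _ _ _ _ hs) h rfl

/-- SN is closed under `app` formation (no top rules at `app`). -/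
theorem snt_app {t1 t2} (h1 : SNt t1) (h2 : SNt t2) : SNt (.app t1 t2) := by
  induction h1 generalizing t2 with
  | intro x1 _ ih1 =>
    induction h2 with
    | intro x2 hx2 ih2 =>
      constructor
      intro y hy
      cases hy with
      | appL _ t1' _ hs => exact ih1 _ hs ⟨_, hx2⟩
      | appR _ _ t2' hs => exact ih2 _ hs

/-- SN is closed under `lam` formation. -/
theorem snt_lam {t} (h : SNt t) : SNt (.lam t) := by
  induction h with
  | intro x _ ih =>
    constructor
    intro y hy
    cases hy with
    | lamC _ t' hs => exact ih _ hs

/-- SN is closed under `cons` formation (no top rules at `cons`). -/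
theorem sne_cons {t e} (h1 : SNt t) (h2 : SNe e) (n : ℕ) : SNe (.cons t n e) := by
  induction h1 generalizing e with
  | intro x1 _ ih1 =>
    induction h2 with
    | intro x2 hx2 ih2 =>
      constructor
      intro y hy
      cases hy with
      | consT _ t' _ _ hs => exact ih1 _ hs ⟨_, hx2⟩
      | consE _ _ _ e' hs => exact ih2 _ hs
/-! ## Trivial (lambda/app-free) expressions and their termination -/

mutual
inductive TrivT : STerm → Prop
  | var (i : ℕ) : TrivT (.var i)
  | const (c : ℕ) : TrivT (.const c)
  | susp {t e} (ol nl : ℕ) : TrivT t → TrivE e → TrivT (.susp t ol nl e)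
inductive TrivE : SEnv → Prop
  | nil : TrivE .nil
  | cons {t e} (l : ℕ) : TrivT t → TrivE e → TrivE (.cons t l e)
  | merge {e1 e2} (nl1 ol2 : ℕ) : TrivE e1 → TrivE e2 → TrivE (.merge e1 nl1 ol2 e2)
end

mutual
/-- termination measure for the lambda-free fragment. -/
def svT : STerm → ℕ
  | .const _ => 1
  | .var _ => 1
  | .app t1 t2 => svT t1 + svT t2 + 1
  | .lam t => svT t + 1
  | .susp t _ _ e => svT t * (svE e + 1)
def svE : SEnv → ℕ
  | .nil => 1
  | .cons t _ e => 2 * svT t + svE e + 1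
  | .merge e1 _ _ e2 => svE e1 * (svE e2 + 1)
end

mutual
theorem svT_pos : ∀ t, 0 < svT t
  | .const _ => Nat.one_pos
  | .var _ => Nat.one_pos
  | .app t1 t2 => by simp [svT]
  | .lam t => by simp [svT]
  | .susp t _ _ e => by
      have := svT_pos t; have := svE_pos e; simp [svT]; positivity
theorem svE_pos : ∀ e, 0 < svE e
  | .nil => Nat.one_pos
  | .cons t _ e => by simp [svE]
  | .merge e1 _ _ e2 => by
      have := svE_pos e1; have := svE_pos e2; simp [svE]; positivity
end

mutual
/-- steps from trivial expressions preserve triviality and decrease `sv`. -/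
theorem triv_step_T : ∀ (t : STerm) {y}, StepT t y → TrivT t → TrivT y ∧ svT y < svT t
  | .var _, _, h, _ => absurd h var_nostep
  | .const _, _, h, _ => absurd h const_nostep
  | .app _ _, _, _, ht => by cases ht
  | .lam _, _, _, ht => by cases ht
  | .susp t0 ol0 nl0 e0, y, h, htriv => by
      cases htriv with
      | susp _ _ ht he => ?_
      cases h with
      | r1 c =>
          refine ⟨.const c, ?_⟩
          have := svE_pos e0; simp [svT]; nlinarith
      | r2 i =>
          refine ⟨.var _, ?_⟩; simp [svT, svE]
      | r3 _ _ t l e =>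
          cases he with | cons _ ht' he' => ?_
          refine ⟨.susp 0 (nl0 - l) ht' .nil, ?_⟩
          have := svE_pos e; have := svT_pos t; simp [svT, svE]; nlinarith
      | r4 i _ _ t l e hi =>
          cases he with | cons _ ht' he' => ?_
          refine ⟨.susp (ol0-1) nl0 (.var _) he', ?_⟩
          have := svT_pos t; have := svE_pos e; simp [svT, svE]
      | r5 t1 t2 => cases ht
      | r6 t => cases ht
      | m1 t ol1 nl1 e1 =>
          cases ht with | susp _ _ ht' he1 => ?_
          refine ⟨.susp _ _ ht' (.merge _ _ he1 he), ?_⟩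
          have h1 := svT_pos t; have h2 := svE_pos e1; have h3 := svE_pos e0
          simp [svT, svE]; nlinarith
      | suspT _ t' _ _ _ hs =>
          obtain ⟨h1, h2⟩ := triv_step_T t0 hs ht
          refine ⟨.susp _ _ h1 he, ?_⟩
          have := svE_pos e0; simp [svT]; nlinarith
      | suspE _ _ _ _ e' hs =>
          obtain ⟨h1, h2⟩ := triv_step_E e0 hs he
          refine ⟨.susp _ _ ht h1, ?_⟩
          have := svT_pos t0; simp [svT]; nlinarith
theorem triv_step_E : ∀ (e : SEnv) {y}, StepE e y → TrivE e → TrivE y ∧ svE y < svE e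
  | .nil, _, h, _ => absurd h nil_nostep
  | .cons t0 n0 f0, y, h, he => by
      cases he with
      | cons _ ht hee => ?_
      cases h with
      | consT _ t' _ _ hs =>
          obtain ⟨h1, h2⟩ := triv_step_T t0 hs ht
          exact ⟨.cons _ h1 hee, by simp [svE]; nlinarith⟩
      | consE _ _ _ e' hs =>
          obtain ⟨h1, h2⟩ := triv_step_E f0 hs hee
          exact ⟨.cons _ ht h1, by simp [svE]; nlinarith⟩
  | .merge f1 a b f2, y, h, he => by
      cases he with
      | merge _ _ he1 he2 => ?_
      cases h with
      | m2 =>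
          refine ⟨he1, ?_⟩
          have := svE_pos f1; simp [svE]; nlinarith
      | m3 =>
          refine ⟨he2, ?_⟩
          have := svE_pos f2; simp [svE]
      | m4 _ _ t l e2 h1 =>
          cases he2 with | cons _ ht he2' => ?_
          refine ⟨.merge _ _ .nil he2', ?_⟩
          have := svT_pos t; have := svE_pos e2; simp [svE]
      | m5 t n e1 _ _ s l e2 hlt =>
          cases he2 with | cons _ hs he2' => ?_
          refine ⟨.merge _ _ he1 he2', ?_⟩
          have := svT_pos s; have := svE_pos e2; have := svE_pos (SEnv.cons t n e1)
          simp only [svE]; nlinarith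
      | m6 t _ e1 _ s l e2 =>
          cases he1 with | cons _ ht he1' => ?_
          refine ⟨.cons _ (.susp _ _ ht he2) (.merge _ _ he1' he2), ?_⟩
          have h1 := svT_pos t; have h2 := svE_pos e1
          have h3 := svE_pos (SEnv.cons s l e2)
          simp only [svE, svT]
          nlinarith
      | mergeL _ e1' _ _ _ hs =>
          obtain ⟨h1, h2⟩ := triv_step_E f1 hs he1
          refine ⟨.merge _ _ h1 he2, ?_⟩
          have := svE_pos f2; simp [svE]; nlinarith
      | mergeR _ _ _ _ e2' hs =>
          obtain ⟨h1, h2⟩ := triv_step_E f2 hs he2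
          refine ⟨.merge _ _ he1 h1, ?_⟩
          have := svE_pos f1; have := svE_pos f2; simp [svE]; nlinarith
end

/-- trivial terms are strongly normalizing. -/
theorem triv_snt {t} (h : TrivT t) : SNt t := by
  have key : ∀ n t, svT t ≤ n → TrivT t → SNt t := by
    intro n
    induction n with
    | zero => intro t hle ht; have := svT_pos t; omega
    | succ n ih =>
      intro t hle ht
      constructor
      intro y hy
      obtain ⟨h1, h2⟩ := triv_step_T t hy ht
      exact ih y (by omega) h1
  exact key _ t le_rfl h

/-- trivial environments are strongly normalizing. -/
theorem triv_sne {e} (h : TrivE e) : SNe e := by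
  have key : ∀ n e, svE e ≤ n → TrivE e → SNe e := by
    intro n
    induction n with
    | zero => intro e hle he; have := svE_pos e; omega
    | succ n ih =>
      intro e hle he
      constructor
      intro y hy
      obtain ⟨h1, h2⟩ := triv_step_E e hy he
      exact ih y (by omega) h1
  exact key _ e le_rfl h
/-! ## Tower closure and environment closure predicates -/

/-- `TW t z`: `z` is obtained from `t` by repeatedly wrapping in suspensions with
trivial environments and taking reduction steps. -/
inductive TW (t : STerm) : STerm → Prop
  | refl : TW t t
  | tower {x : STerm} (ol nl : ℕ) {ε : SEnv} : TW t x → TrivE ε → TW t (.susp x ol nl ε)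
  | step {x y : STerm} : TW t x → StepT x y → TW t y

/-- `t` together with all its trivial towers is strongly normalizing. -/
def TWOK (t : STerm) : Prop := ∀ z, TW t z → SNt z

/-- `CE e z`: `z` is obtained from `e` by steps and by taking tails of cons cells. -/
inductive CE (e : SEnv) : SEnv → Prop
  | refl : CE e e
  | step {x y : SEnv} : CE e x → StepE x y → CE e y
  | tail {s : STerm} {l : ℕ} {x : SEnv} : CE e (.cons s l x) → CE e x

/-- good environment: all elements of the closure are SN and all heads are `TWOK`. -/
def GOODS (e : SEnv) : Prop :=
  ∀ z, CE e z → SNe z ∧ ∀ s l x, z = .cons s l x → TWOK s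

theorem TW.trans {t x z} (h1 : TW t x) (h2 : TW x z) : TW t z := by
  induction h2 with
  | refl => exact h1
  | tower ol nl hx hε ih => exact .tower ol nl ih hε
  | step hx hs ih => exact .step ih hs

theorem CE.trans {e x z} (h1 : CE e x) (h2 : CE x z) : CE e z := by
  induction h2 with
  | refl => exact h1
  | step hx hs ih => exact .step ih hs
  | tail hx ih => exact .tail ih

theorem TWOK.of_TW {t x} (h : TWOK t) (hx : TW t x) : TWOK x :=
  fun z hz => h z (hx.trans hz)

theorem TWOK.snt {t} (h : TWOK t) : SNt t := h t .refl

theorem TWOK.step {t y} (h : TWOK t) (hs : StepT t y) : TWOK y :=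
  h.of_TW (.step .refl hs)

theorem TWOK.tower {t} (h : TWOK t) (ol nl : ℕ) {ε} (hε : TrivE ε) :
    TWOK (.susp t ol nl ε) := h.of_TW (.tower ol nl .refl hε)

theorem GOODS.of_CE {e x} (h : GOODS e) (hx : CE e x) : GOODS x :=
  fun z hz => h z (hx.trans hz)

theorem GOODS.sne {e} (h : GOODS e) : SNe e := (h e .refl).1

theorem GOODS.step {e y} (h : GOODS e) (hs : StepE e y) : GOODS y :=
  h.of_CE (.step .refl hs)

theorem GOODS.tail {s : STerm} {l : ℕ} {x : SEnv} (h : GOODS (.cons s l x)) : GOODS x :=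
  h.of_CE (.tail .refl)

theorem GOODS.head {e : SEnv} (h : GOODS e) {s : STerm} {l : ℕ} {x : SEnv} (hx : CE e (.cons s l x)) : TWOK s :=
  (h _ hx).2 s l x rfl

/-- trivial terms have SN towers. -/
theorem triv_TWOK {t} (h : TrivT t) : TWOK t := by
  intro z hz
  have : TrivT z := by
    induction hz with
    | refl => exact h
    | tower ol nl hx hε ih => exact .susp _ _ ih hε
    | step hx hs ih => exact (triv_step_T _ hs ih).1
  exact triv_snt this

/-- trivial environments are good. -/
theorem triv_GOODS {e} (h : TrivE e) : GOODS e := by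
  intro z hz
  have hTz : TrivE z := by
    induction hz with
    | refl => exact h
    | step hx hs ih => exact (triv_step_E _ hs ih).1
    | tail hx ih => cases ih with | cons _ ht he => exact he
  refine ⟨triv_sne hTz, ?_⟩
  rintro s l x rfl
  cases hTz with | cons _ ht he => exact triv_TWOK ht

theorem goods_nil : GOODS .nil := triv_GOODS .nil
/-! ## Strong normalization of merges (with an oracle for created heads) -/

/-- length of the cons-spine of an environment. -/
def spineLen : SEnv → ℕ
  | .cons _ _ e => spineLen e + 1
  | _ => 0

/-- `IsTail f a`: `f` is an iterated tail of `a`. -/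
inductive IsTail : SEnv → SEnv → Prop
  | refl (a : SEnv) : IsTail a a
  | tail {f a : SEnv} {s : STerm} {l : ℕ} : IsTail (.cons s l f) a → IsTail f a

theorem tail_lift {f a f' : SEnv} (h : IsTail f a) (hs : StepE f f') :
    ∃ a', StepE a a' ∧ IsTail f' a' := by
  induction h generalizing f' with
  | refl a => exact ⟨f', hs, .refl f'⟩
  | tail h ih =>
    obtain ⟨a', ha, ht⟩ := ih (StepE.consE _ _ _ _ hs)
    exact ⟨a', ha, .tail ht⟩

section MergeSN

variable {f₀ g₀ : SEnv} (hf₀ : GOODS f₀) (hg₀ : GOODS g₀)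
  (OR : ∀ (u : STerm) (k : ℕ) (f' : SEnv), CE f₀ (.cons u k f') →
        ∀ g', CE g₀ g' → ∀ a b, TWOK (.susp u a b g'))

include hf₀ hg₀ OR in
theorem merge_sn_aux : ∀ af, SNe af → ∀ sp : ℕ, ∀ ag, SNe ag → ∀ sq : ℕ,
    ∀ f g nl ol, IsTail f af → spineLen f ≤ sp → IsTail g ag → spineLen g ≤ sq →
      CE f₀ f → CE g₀ g → SNe (.merge f nl ol g) := by
  intro af haf
  induction haf with
  | intro af hafacc ihf =>
    intro sp
    induction sp using Nat.strong_induction_on with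
    | _ sp ihsp =>
      intro ag hag
      induction hag with
      | intro ag hagacc ihg =>
        intro sq
        induction sq using Nat.strong_induction_on with
        | _ sq ihsq =>
          intro f g nl ol htf hsf htg hsg hcf hcg
          constructor
          intro y hy
          cases hy with
          | m2 => exact (hf₀ f hcf).1
          | m3 => exact (hg₀ g hcg).1
          | m4 _ _ t l e2 h1 =>
              have hlt : spineLen e2 < sq := by
                have : spineLen (SEnv.cons t l e2) ≤ sq := hsg
                simp [spineLen] at this; omega
              exact ihsq (spineLen e2) hlt .nil e2 (nl-1) (ol-1) htf hsf
                (.tail htg) le_rfl hcf (.tail hcg)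
          | m5 t n e1 _ _ s l e2 hlt' =>
              have hlt : spineLen e2 < sq := by
                have : spineLen (SEnv.cons s l e2) ≤ sq := hsg
                simp [spineLen] at this; omega
              exact ihsq (spineLen e2) hlt (.cons t n e1) e2 (nl-1) (ol-1) htf hsf
                (.tail htg) le_rfl hcf (.tail hcg)
          | m6 t _ e1 _ s l e2 =>
              have hX : SNt (.susp t ol l (.cons s l e2)) :=
                (OR t nl e1 hcf (.cons s l e2) hcg ol l).snt
              have hlt : spineLen e1 < sp := by
                have : spineLen (SEnv.cons t nl e1) ≤ sp := hsf
                simp [spineLen] at this; omega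
              have hM : SNe (.merge e1 nl ol (.cons s l e2)) :=
                ihsp (spineLen e1) hlt ag ⟨ag, hagacc⟩ (spineLen (SEnv.cons s l e2))
                  e1 (.cons s l e2) nl ol (.tail htf) le_rfl htg le_rfl (.tail hcf) hcg
              exact sne_cons hX hM _
          | mergeL _ e1' _ _ _ hs =>
              obtain ⟨af', ha, ht'⟩ := tail_lift htf hs
              exact ihf af' ha (spineLen e1') ag ⟨ag, hagacc⟩ (spineLen g)
                e1' g nl ol ht' le_rfl htg le_rfl (.step hcf hs) hcg
          | mergeR _ _ _ _ e2' hs =>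
              obtain ⟨ag', ha, ht'⟩ := tail_lift htg hs
              exact ihg ag' ha (spineLen e2') f e2' nl ol htf hsf ht' le_rfl
                hcf (.step hcg hs)

include hf₀ hg₀ OR in
theorem merge_sn {f g : SEnv} (hcf : CE f₀ f) (hcg : CE g₀ g) (nl ol : ℕ) :
    SNe (.merge f nl ol g) :=
  merge_sn_aux hf₀ hg₀ OR f (hf₀ f hcf).1 (spineLen f) g (hg₀ g hcg).1 (spineLen g)
    f g nl ol (.refl f) le_rfl (.refl g) le_rfl hcf hcg

/-- the family of environments reachable from a merge. -/
inductive GFAM (f₀ g₀ : SEnv) : SEnv → Prop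
  | mer {f g : SEnv} (nl ol : ℕ) : CE f₀ f → CE g₀ g → GFAM f₀ g₀ (.merge f nl ol g)
  | absf {z} : CE f₀ z → GFAM f₀ g₀ z
  | absg {z} : CE g₀ z → GFAM f₀ g₀ z
  | hd {X : STerm} {m : ℕ} {M : SEnv} : TWOK X → GFAM f₀ g₀ M → GFAM f₀ g₀ (.cons X m M)

include OR in
theorem gfam_step : ∀ {z z'}, GFAM f₀ g₀ z → StepE z z' → GFAM f₀ g₀ z' := by
  intro z z' hz hs
  induction hz generalizing z' with
  | mer nl ol hcf hcg =>
      cases hs with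
      | m2 => exact .absf hcf
      | m3 => exact .absg hcg
      | m4 _ _ t l e2 h1 => exact .mer _ _ hcf (.tail hcg)
      | m5 t n e1 _ _ s l e2 hlt => exact .mer _ _ hcf (.tail hcg)
      | m6 t _ e1 _ s l e2 =>
          exact .hd (OR t nl e1 hcf _ hcg ol l) (.mer _ _ (.tail hcf) hcg)
      | mergeL _ e1' _ _ _ hs' => exact .mer _ _ (.step hcf hs') hcg
      | mergeR _ _ _ _ e2' hs' => exact .mer _ _ hcf (.step hcg hs')
  | absf h => exact .absf (.step h hs)
  | absg h => exact .absg (.step h hs)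
  | hd hX hM ih =>
      cases hs with
      | consT _ t' _ _ hs' => exact .hd (hX.step hs') hM
      | consE _ _ _ e' hs' => exact .hd hX (ih hs')

theorem gfam_tail {s : STerm} {l : ℕ} {M : SEnv} (h : GFAM f₀ g₀ (.cons s l M)) :
    GFAM f₀ g₀ M := by
  cases h with
  | absf h => exact .absf (.tail h)
  | absg h => exact .absg (.tail h)
  | hd hX hM => exact hM

theorem gfam_head {s : STerm} {l : ℕ} {M : SEnv}
    (hf₀ : GOODS f₀) (hg₀ : GOODS g₀) (h : GFAM f₀ g₀ (.cons s l M)) : TWOK s := by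
  cases h with
  | absf h => exact hf₀.head h
  | absg h => exact hg₀.head h
  | hd hX hM => exact hX

include hf₀ hg₀ OR in
theorem gfam_sne : ∀ {z}, GFAM f₀ g₀ z → SNe z := by
  intro z hz
  induction hz with
  | mer nl ol hcf hcg => exact merge_sn hf₀ hg₀ OR hcf hcg nl ol
  | absf h => exact (hf₀ _ h).1
  | absg h => exact (hg₀ _ h).1
  | hd hX hM ih => exact sne_cons hX.snt ih _

include hf₀ hg₀ OR in
/-- main conclusion: a merge of good environments is SN and good. -/
theorem merge_goods (nl ol : ℕ) :
    SNe (.merge f₀ nl ol g₀) ∧ GOODS (.merge f₀ nl ol g₀) := by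
  have hmem : ∀ z, CE (.merge f₀ nl ol g₀) z → GFAM f₀ g₀ z := by
    intro z hz
    induction hz with
    | refl => exact .mer _ _ .refl .refl
    | step hx hs ih => exact gfam_step OR ih hs
    | tail hx ih => exact gfam_tail ih
  constructor
  · exact gfam_sne hf₀ hg₀ OR (.mer _ _ .refl .refl)
  · intro z hz
    refine ⟨gfam_sne hf₀ hg₀ OR (hmem z hz), ?_⟩
    rintro s l x rfl
    exact gfam_head hf₀ hg₀ (hmem _ hz)

end MergeSN

/-- triviality is preserved by the environment closure. -/
theorem triv_CE {ε z} (h : TrivE ε) (hz : CE ε z) : TrivE z := by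
  induction hz with
  | refl => exact h
  | step hx hs ih => exact (triv_step_E _ hs ih).1
  | tail hx ih => cases ih with | cons _ ht he => exact he

/-- merging a good environment with a trivial one. -/
theorem merge_triv_goods {f ε : SEnv} (hf : GOODS f) (hε : TrivE ε) (nl ol : ℕ) :
    SNe (.merge f nl ol ε) ∧ GOODS (.merge f nl ol ε) := by
  refine merge_goods hf (triv_GOODS hε) ?_ nl ol
  intro u k f' hcf g' hcg a b
  exact (hf.head hcf).tower a b (triv_CE hε hcg)

/-- a cons of a tower-SN term onto a good environment is good. -/
theorem goods_cons {s : STerm} {e : SEnv} (hs : TWOK s) (he : GOODS e) (l : ℕ) :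
    GOODS (.cons s l e) := by
  have hmem : ∀ z, CE (.cons s l e) z →
      (∃ s' l' e', TWOK s' ∧ CE e e' ∧ z = .cons s' l' e') ∨ CE e z := by
    intro z hz
    induction hz with
    | refl => exact .inl ⟨s, l, e, hs, .refl, rfl⟩
    | step hx hstp ih =>
        rcases ih with ⟨s', l', e', hs', he', rfl⟩ | h
        · cases hstp with
          | consT _ t' _ _ h' => exact .inl ⟨t', l', e', hs'.step h', he', rfl⟩
          | consE _ _ _ e'' h' => exact .inl ⟨s', l', e'', hs', .step he' h', rfl⟩
        · exact .inr (.step h hstp)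
    | tail hx ih =>
        rcases ih with ⟨s', l', e', hs', he', heq⟩ | h
        · cases heq; exact .inr he'
        · exact .inr (.tail h)
  intro z hz
  rcases hmem z hz with ⟨s', l', e', hs', he', rfl⟩ | h
  · refine ⟨sne_cons hs'.snt (he _ he').1 _, ?_⟩
    rintro a b c heq; cases heq; exact hs'
  · exact he z h
/-! ## The generic tower machine -/

/-- tower view: `TwV b z k s` iff `z` is a height-`k` tower of suspensions with
trivial environments (total measure `s`) over the base `b`. -/
inductive TwV (b : STerm) : STerm → ℕ → ℕ → Prop
  | zero : TwV b b 0 0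
  | succ {z : STerm} {k s : ℕ} (ol nl : ℕ) {ε : SEnv} :
      TwV b z k s → TrivE ε → TwV b (.susp z ol nl ε) (k+1) (s + svE ε)

section TowerMachine

variable {B : STerm → Prop} {R : STerm → STerm → Prop}
  (hAccR : ∀ b, B b → Acc R b)
  (H1 : ∀ b, B b → ∀ y, StepT b y → (B y ∧ R y b) ∨ TWOK y)
  (H2 : ∀ b, B b → ∀ ol nl ε, TrivE ε → ∀ y, StepT (.susp b ol nl ε) y →
        (∃ b'', y = .susp b'' ol nl ε ∧ StepT b b'') ∨
        (∃ ε'', y = .susp b ol nl ε'' ∧ StepE ε ε'') ∨ B y ∨ TWOK y)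

include H1 H2 in
theorem tm_aux : ∀ {b}, B b → ∀ {x k s}, TwV b x k s → ∀ y, StepT x y →
    (∃ b' k' s', B b' ∧ TwV b' y k' s' ∧
      (k' < k ∨ (k' = k ∧ s' < s ∧ b' = b) ∨ (k' = k ∧ s' = s ∧ R b' b))) ∨ TWOK y := by
  intro b hb x k s hx
  induction hx with
  | zero =>
      intro y hy
      rcases H1 b hb y hy with ⟨hBy, hRy⟩ | hok
      · exact .inl ⟨y, 0, 0, hBy, .zero, .inr (.inr ⟨rfl, rfl, hRy⟩)⟩
      · exact .inr hok
  | @succ z k₀ s₀ ol nl ε hz hε ih =>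
      intro y hy
      cases hz with
      | zero =>
          -- x = susp b ol nl ε
          rcases H2 b hb ol nl ε hε y hy with ⟨b'', rfl, hs⟩ | ⟨ε'', rfl, hs⟩ | hBy | hok
          · rcases H1 b hb b'' hs with ⟨hB'', hR''⟩ | hok
            · exact .inl ⟨b'', 1, 0 + svE ε, hB'', .succ ol nl .zero hε,
                .inr (.inr ⟨rfl, rfl, hR''⟩)⟩
            · exact .inr (hok.tower ol nl hε)
          · obtain ⟨hTε'', hlt⟩ := triv_step_E ε hs hε
            exact .inl ⟨b, 1, 0 + svE ε'', hb, .succ ol nl .zero hTε'',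
              .inr (.inl ⟨rfl, by omega, rfl⟩)⟩
          · exact .inl ⟨y, 0, 0, hBy, .zero, .inl (by omega)⟩
          · exact .inr hok
      | @succ z₀ k₁ s₁ ol₀ nl₀ ε₀ hz₀ hε₀ =>
          -- x = susp (susp z₀ ol₀ nl₀ ε₀) ol nl ε ; the only top rule is m1
          cases hy with
          | suspT _ z' _ _ _ hs =>
              rcases ih z' hs with ⟨b', k', s', hb', hz', hlex⟩ | hok
              · refine .inl ⟨b', k'+1, s' + svE ε, hb', .succ ol nl hz' hε, ?_⟩
                rcases hlex with h | ⟨h1, h2, h3⟩ | ⟨h1, h2, h3⟩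
                · exact .inl (by omega)
                · exact .inr (.inl ⟨by omega, by omega, h3⟩)
                · exact .inr (.inr ⟨by omega, by omega, h3⟩)
              · exact .inr (hok.tower ol nl hε)
          | suspE _ _ _ _ ε' hs =>
              obtain ⟨hTε', hlt⟩ := triv_step_E ε hs hε
              exact .inl ⟨b, (k₁+1)+1, (s₁ + svE ε₀) + svE ε', hb,
                .succ ol nl (.succ ol₀ nl₀ hz₀ hε₀) hTε',
                .inr (.inl ⟨rfl, by omega, rfl⟩)⟩
          | m1 =>
              exact .inl ⟨b, k₁+1, s₁ + svE (.merge ε₀ nl₀ ol ε), hb,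
                .succ _ _ hz₀ (.merge _ _ hε₀ hε), .inl (by omega)⟩

include hAccR H1 H2 in
theorem tm_main : ∀ k s b, B b → ∀ z, TwV b z k s → SNt z := by
  intro k
  induction k using Nat.strong_induction_on with
  | _ k ihk =>
    intro s
    induction s using Nat.strong_induction_on with
    | _ s ihs =>
      intro b hb
      have haccb := hAccR b hb
      revert hb
      induction haccb with
      | intro b _ ihb =>
        intro hb
        intro z hz
        constructor
        intro y hy
        rcases tm_aux H1 H2 hb hz y hy with ⟨b', k', s', hb', hz', hlex⟩ | hok
        · rcases hlex with h | ⟨rfl, h2, rfl⟩ | ⟨rfl, rfl, h3⟩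
          · exact ihk k' h s' b' hb' y hz'
          · exact ihs s' h2 _ hb' y hz'
          · exact ihb b' h3 hb' y hz'
        · exact hok.snt

include H1 H2 in
theorem tm_cover {b₀} (hb₀ : B b₀) : ∀ z, TW b₀ z →
    (∃ b k s, B b ∧ TwV b z k s) ∨ TWOK z := by
  intro z hz
  induction hz with
  | refl => exact .inl ⟨b₀, 0, 0, hb₀, .zero⟩
  | tower ol nl hx hε ih =>
      rcases ih with ⟨b, k, s, hb, hv⟩ | hok
      · exact .inl ⟨b, k+1, s + svE _, hb, .succ ol nl hv hε⟩
      · exact .inr (hok.tower ol nl hε)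
  | step hx hs ih =>
      rcases ih with ⟨b, k, s, hb, hv⟩ | hok
      · rcases tm_aux H1 H2 hb hv _ hs with ⟨b', k', s', hb', hv', _⟩ | hok
        · exact .inl ⟨b', k', s', hb', hv'⟩
        · exact .inr hok
      · exact .inr (hok.step hs)

include hAccR H1 H2 in
/-- the tower machine: every base has SN towers. -/
theorem tower_machine {b₀} (hb₀ : B b₀) : TWOK b₀ := by
  intro z hz
  rcases tm_cover H1 H2 hb₀ z hz with ⟨b, k, s, hb, hv⟩ | hok
  · exact tm_main hAccR H1 H2 k s b hb z hv
  · exact hok.snt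

end TowerMachine
/-! ## Instantiations of the tower machine -/

/-- decrease relation for atomic bases: only the environment evolves, or the
de Bruijn index decreases. -/
inductive AtomR : STerm → STerm → Prop
  | envC {t : STerm} {ol nl : ℕ} {g g' : SEnv} :
      StepE g g' → AtomR (.susp t ol nl g') (.susp t ol nl g)
  | idx {i i' ol nl ol' nl' : ℕ} {g g' : SEnv} :
      i' < i → SNe g' → AtomR (.susp (.var i') ol' nl' g') (.susp (.var i) ol nl g)

theorem atomR_acc_const {c ol nl : ℕ} {g : SEnv} (hg : SNe g) :
    Acc AtomR (.susp (.const c) ol nl g) := by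
  induction hg generalizing ol nl with
  | intro g _ ih =>
    constructor
    intro y hy
    cases hy with
    | envC hs => exact ih _ hs

theorem atomR_acc_var : ∀ (i ol nl : ℕ) (g : SEnv), SNe g →
    Acc AtomR (.susp (.var i) ol nl g) := by
  intro i
  induction i using Nat.strong_induction_on with
  | _ i ihi =>
    intro ol nl g hg
    induction hg generalizing ol nl with
    | intro g hga ih =>
      constructor
      intro y hy
      cases hy with
      | envC hs => exact ih _ hs _ _
      | idx hlt hsn => exact ihi _ hlt _ _ _ hsn

/-- towers over a suspended constant are SN. -/
theorem twok_susp_const {g : SEnv} (hg1 : SNe g) (hg2 : GOODS g) (c ol nl : ℕ) :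
    TWOK (.susp (.const c) ol nl g) := by
  refine tower_machine
    (B := fun x => ∃ c ol nl g, x = .susp (.const c) ol nl g ∧ SNe g ∧ GOODS g)
    (R := AtomR) ?_ ?_ ?_ ⟨c, ol, nl, g, rfl, hg1, hg2⟩
  · rintro b ⟨c, ol, nl, g, rfl, h1, h2⟩
    exact atomR_acc_const h1
  · rintro b ⟨c, ol, nl, g, rfl, h1, h2⟩ y hy
    cases hy with
    | r1 => exact .inr (triv_TWOK (.const c))
    | suspT _ t' _ _ _ hs => exact absurd hs const_nostep
    | suspE _ _ _ _ g' hs =>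
        exact .inl ⟨⟨c, ol, nl, g', rfl, h1.inv hs, h2.step hs⟩, .envC hs⟩
  · rintro b ⟨c, ol, nl, g, rfl, h1, h2⟩ olx nlx ε hε y hy
    cases hy with
    | suspT _ t' _ _ _ hs => exact .inl ⟨t', rfl, hs⟩
    | suspE _ _ _ _ ε' hs => exact .inr (.inl ⟨ε', rfl, hs⟩)
    | m1 =>
        refine .inr (.inr (.inl ⟨c, _, _, _, rfl, ?_, ?_⟩))
        · exact (merge_triv_goods h2 hε nl olx).1
        · exact (merge_triv_goods h2 hε nl olx).2

/-- towers over a suspended variable are SN. -/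
theorem twok_susp_var {g : SEnv} (hg1 : SNe g) (hg2 : GOODS g) (i ol nl : ℕ) :
    TWOK (.susp (.var i) ol nl g) := by
  refine tower_machine
    (B := fun x => ∃ i ol nl g, x = .susp (.var i) ol nl g ∧ SNe g ∧ GOODS g)
    (R := AtomR) ?_ ?_ ?_ ⟨i, ol, nl, g, rfl, hg1, hg2⟩
  · rintro b ⟨i, ol, nl, g, rfl, h1, h2⟩
    exact atomR_acc_var i ol nl g h1
  · rintro b ⟨i, ol, nl, g, rfl, h1, h2⟩ y hy
    cases hy with
    | r2 => exact .inr (triv_TWOK (.var _))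
    | r3 _ _ t l e =>
        -- y = susp t 0 (nl - l) nil ; t is the head of g
        exact .inr ((h2.head .refl).tower 0 (nl - l) .nil)
    | r4 _ _ _ t l e hj =>
        refine .inl ⟨⟨i - 1, ol - 1, nl, e, rfl, ?_, ?_⟩, .idx (by omega) ?_⟩
        · exact sne_cons_env h1
        · exact h2.tail
        · exact sne_cons_env h1
    | suspT _ t' _ _ _ hs => exact absurd hs var_nostep
    | suspE _ _ _ _ g' hs =>
        exact .inl ⟨⟨i, ol, nl, g', rfl, h1.inv hs, h2.step hs⟩, .envC hs⟩
  · rintro b ⟨i, ol, nl, g, rfl, h1, h2⟩ olx nlx ε hε y hy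
    cases hy with
    | suspT _ t' _ _ _ hs => exact .inl ⟨t', rfl, hs⟩
    | suspE _ _ _ _ ε' hs => exact .inr (.inl ⟨ε', rfl, hs⟩)
    | m1 =>
        refine .inr (.inr (.inl ⟨i, _, _, _, rfl, ?_, ?_⟩))
        · exact (merge_triv_goods h2 hε nl olx).1
        · exact (merge_triv_goods h2 hε nl olx).2

/-! ### lambda bases -/

inductive LamR : STerm → STerm → Prop
  | lamC {w w' : STerm} : StepT w w' → LamR (.lam w') (.lam w)

theorem lamR_acc {w : STerm} (hw : SNt w) : Acc LamR (.lam w) := by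
  induction hw with
  | intro w _ ih =>
    constructor
    intro y hy
    cases hy with
    | lamC hs => exact ih _ hs

/-- towers over a lambda are SN, provided towers over the body are. -/
theorem twok_lam {Y : STerm} (hY : TWOK Y) : TWOK (.lam Y) := by
  refine tower_machine (B := fun x => ∃ w, x = .lam w ∧ TW Y w) (R := LamR)
    ?_ ?_ ?_ ⟨Y, rfl, .refl⟩
  · rintro b ⟨w, rfl, hw⟩
    exact lamR_acc (hY _ hw)
  · rintro b ⟨w, rfl, hw⟩ y hy
    cases hy with
    | lamC _ w' hs => exact .inl ⟨⟨w', rfl, .step hw hs⟩, .lamC hs⟩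
  · rintro b ⟨w, rfl, hw⟩ olx nlx ε hε y hy
    cases hy with
    | r6 => exact .inr (.inr (.inl ⟨_, rfl, .tower _ _ hw (.cons _ (.var 1) hε)⟩))
    | suspT _ t' _ _ _ hs => exact .inl ⟨t', rfl, hs⟩
    | suspE _ _ _ _ ε' hs => exact .inr (.inl ⟨ε', rfl, hs⟩)

/-! ### application bases -/

inductive AppR : STerm → STerm → Prop
  | appL {u u' v : STerm} : StepT u u' → AppR (.app u' v) (.app u v)
  | appR {u v v' : STerm} : StepT v v' → AppR (.app u v') (.app u v)
  | pre1 {u₀ u₀' v₀ : STerm} {ol nl : ℕ} {g : SEnv} : StepT u₀ u₀' →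
      AppR (.susp (.app u₀' v₀) ol nl g) (.susp (.app u₀ v₀) ol nl g)
  | pre2 {u₀ v₀ v₀' : STerm} {ol nl : ℕ} {g : SEnv} : StepT v₀ v₀' →
      AppR (.susp (.app u₀ v₀') ol nl g) (.susp (.app u₀ v₀) ol nl g)
  | preE {u₀ v₀ : STerm} {ol nl : ℕ} {g g' : SEnv} : StepE g g' →
      AppR (.susp (.app u₀ v₀) ol nl g') (.susp (.app u₀ v₀) ol nl g)
  | unfold {u₀ v₀ : STerm} {ol nl : ℕ} {g : SEnv} :
      AppR (.app (.susp u₀ ol nl g) (.susp v₀ ol nl g)) (.susp (.app u₀ v₀) ol nl g)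

theorem appR_acc_app {u v : STerm} (hu : SNt u) (hv : SNt v) : Acc AppR (.app u v) := by
  induction hu generalizing v with
  | intro u _ ihu =>
    induction hv with
    | intro v hva ihv =>
      constructor
      intro y hy
      cases hy with
      | appL hs => exact ihu _ hs ⟨v, hva⟩
      | appR hs => exact ihv _ hs

theorem appR_acc_pre : ∀ a, SNt a → ∀ b, SNt b → ∀ u₀ v₀ ol nl g,
    a = .susp u₀ ol nl g → b = .susp v₀ ol nl g →
    Acc AppR (.susp (.app u₀ v₀) ol nl g) := by
  intro a ha
  induction ha with
  | intro a haa iha =>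
    intro b hb
    induction hb with
    | intro b hba ihb =>
      rintro u₀ v₀ ol nl g rfl rfl
      constructor
      intro y hy
      cases hy with
      | pre1 hs =>
          exact iha _ (StepT.suspT _ _ _ _ _ hs) _ ⟨_, hba⟩ _ _ _ _ _ rfl rfl
      | pre2 hs =>
          exact ihb _ (StepT.suspT _ _ _ _ _ hs) _ _ _ _ _ rfl rfl
      | preE hs =>
          exact iha _ (StepT.suspE _ _ _ _ _ hs) _
            (Acc.inv ⟨_, hba⟩ (StepT.suspE _ _ _ _ _ hs)) _ _ _ _ _ rfl rfl
      | unfold => exact appR_acc_app ⟨_, haa⟩ ⟨_, hba⟩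

/-- towers over applications are SN, provided towers over both sides are. -/
theorem twok_app {A B : STerm} (hA : TWOK A) (hB : TWOK B) : TWOK (.app A B) := by
  refine tower_machine
    (B := fun x => (∃ u v, x = .app u v ∧ TW A u ∧ TW B v) ∨
      (∃ u₀ v₀ ol nl g, x = .susp (.app u₀ v₀) ol nl g ∧
        TW A (.susp u₀ ol nl g) ∧ TW B (.susp v₀ ol nl g)))
    (R := AppR) ?_ ?_ ?_ (.inl ⟨A, B, rfl, .refl, .refl⟩)
  · rintro b (⟨u, v, rfl, hu, hv⟩ | ⟨u₀, v₀, ol, nl, g, rfl, hu, hv⟩)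
    · exact appR_acc_app (hA _ hu) (hB _ hv)
    · exact appR_acc_pre _ (hA _ hu) _ (hB _ hv) _ _ _ _ _ rfl rfl
  · rintro b (⟨u, v, rfl, hu, hv⟩ | ⟨u₀, v₀, ol, nl, g, rfl, hu, hv⟩) y hy
    · cases hy with
      | appL _ u' _ hs => exact .inl ⟨.inl ⟨u', v, rfl, .step hu hs, hv⟩, .appL hs⟩
      | appR _ _ v' hs => exact .inl ⟨.inl ⟨u, v', rfl, hu, .step hv hs⟩, .appR hs⟩
    · cases hy with
      | r5 =>
          exact .inl ⟨.inl ⟨_, _, rfl, hu, hv⟩, .unfold⟩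
      | suspT _ t' _ _ _ hs =>
          cases hs with
          | appL _ u₀' _ hs' =>
              exact .inl ⟨.inr ⟨u₀', v₀, ol, nl, g, rfl,
                .step hu (.suspT _ _ _ _ _ hs'), hv⟩, .pre1 hs'⟩
          | appR _ _ v₀' hs' =>
              exact .inl ⟨.inr ⟨u₀, v₀', ol, nl, g, rfl, hu,
                .step hv (.suspT _ _ _ _ _ hs')⟩, .pre2 hs'⟩
      | suspE _ _ _ _ g' hs =>
          exact .inl ⟨.inr ⟨u₀, v₀, ol, nl, g', rfl,
            .step hu (.suspE _ _ _ _ _ hs), .step hv (.suspE _ _ _ _ _ hs)⟩, .preE hs⟩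
  · rintro b (⟨u, v, rfl, hu, hv⟩ | ⟨u₀, v₀, ol, nl, g, rfl, hu, hv⟩) olx nlx ε hε y hy
    · cases hy with
      | r5 =>
          exact .inr (.inr (.inl (.inl ⟨_, _, rfl, .tower _ _ hu hε, .tower _ _ hv hε⟩)))
      | suspT _ t' _ _ _ hs => exact .inl ⟨t', rfl, hs⟩
      | suspE _ _ _ _ ε' hs => exact .inr (.inl ⟨ε', rfl, hs⟩)
    · cases hy with
      | m1 =>
          refine .inr (.inr (.inl (.inr ⟨u₀, v₀, _, _, _, rfl, ?_, ?_⟩)))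
          · exact .step (.tower olx nlx hu hε) (.m1 _ _ _ _ _ _ _)
          · exact .step (.tower olx nlx hv hε) (.m1 _ _ _ _ _ _ _)
      | suspT _ t' _ _ _ hs => exact .inl ⟨t', rfl, hs⟩
      | suspE _ _ _ _ ε' hs => exact .inr (.inl ⟨ε', rfl, hs⟩)
/-! ## Combined expressions, subexpression relation, and well-founded recursion -/

abbrev Expr := STerm ⊕ SEnv

inductive StepX : Expr → Expr → Prop
  | t {a b : STerm} : StepT a b → StepX (.inl a) (.inl b)
  | e {a b : SEnv} : StepE a b → StepX (.inr a) (.inr b)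

inductive SubX : Expr → Expr → Prop
  | appL {t1 t2 : STerm} : SubX (.inl t1) (.inl (.app t1 t2))
  | appR {t1 t2 : STerm} : SubX (.inl t2) (.inl (.app t1 t2))
  | lam {t : STerm} : SubX (.inl t) (.inl (.lam t))
  | suspT {t : STerm} {ol nl : ℕ} {e : SEnv} : SubX (.inl t) (.inl (.susp t ol nl e))
  | suspE {t : STerm} {ol nl : ℕ} {e : SEnv} : SubX (.inr e) (.inl (.susp t ol nl e))
  | consH {t : STerm} {n : ℕ} {e : SEnv} : SubX (.inl t) (.inr (.cons t n e))
  | consT {t : STerm} {n : ℕ} {e : SEnv} : SubX (.inr e) (.inr (.cons t n e))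
  | mergeL {e1 : SEnv} {nl1 ol2 : ℕ} {e2 : SEnv} : SubX (.inr e1) (.inr (.merge e1 nl1 ol2 e2))
  | mergeR {e1 : SEnv} {nl1 ol2 : ℕ} {e2 : SEnv} : SubX (.inr e2) (.inr (.merge e1 nl1 ol2 e2))

noncomputable def sizeX : Expr → ℕ
  | .inl t => sizeOf t
  | .inr e => sizeOf e

theorem subx_size {y x : Expr} (h : SubX y x) : sizeX y < sizeX x := by
  cases h <;> simp [sizeX] <;> omega

theorem subx_lift {y x y' : Expr} (h : SubX y x) (hs : StepX y y') :
    ∃ x', StepX x x' ∧ SubX y' x' := by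
  cases h with
  | appL => cases hs with | t hs => exact ⟨_, .t (.appL _ _ _ hs), .appL⟩
  | appR => cases hs with | t hs => exact ⟨_, .t (.appR _ _ _ hs), .appR⟩
  | lam => cases hs with | t hs => exact ⟨_, .t (.lamC _ _ hs), .lam⟩
  | suspT => cases hs with | t hs => exact ⟨_, .t (.suspT _ _ _ _ _ hs), .suspT⟩
  | suspE => cases hs with | e hs => exact ⟨_, .t (.suspE _ _ _ _ _ hs), .suspE⟩
  | consH => cases hs with | t hs => exact ⟨_, .e (.consT _ _ _ _ hs), .consH⟩
  | consT => cases hs with | e hs => exact ⟨_, .e (.consE _ _ _ _ hs), .consT⟩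
  | mergeL => cases hs with | e hs => exact ⟨_, .e (.mergeL _ _ _ _ _ hs), .mergeL⟩
  | mergeR => cases hs with | e hs => exact ⟨_, .e (.mergeR _ _ _ _ _ hs), .mergeR⟩

inductive SubStar : Expr → Expr → Prop
  | refl (x : Expr) : SubStar x x
  | snoc {z y x : Expr} : SubStar y x → SubX z y → SubStar z x

theorem substar_lift {y x y' : Expr} (h : SubStar y x) (hs : StepX y y') :
    ∃ x', StepX x x' ∧ SubStar y' x' := by
  induction h generalizing y' with
  | refl => exact ⟨y', hs, .refl y'⟩
  | snoc hsub hz ih =>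
      obtain ⟨w, hw, hz'⟩ := subx_lift hz hs
      obtain ⟨x', hx', hsub'⟩ := ih hw
      exact ⟨x', hx', .snoc hsub' hz'⟩

/-- the union of reduction and subexpression, reversed. -/
def SRr : Expr → Expr → Prop := fun y x => StepX x y ∨ SubX y x

theorem sr_descend {x y : Expr} (hx : Acc SRr x) (h : SubStar y x) : Acc SRr y := by
  induction h with
  | refl => exact hx
  | snoc hsub hz ih => exact Acc.inv (ih hx) (.inr hz)

/-- Bachmair–Dershowitz style: accessibility for the union of reduction with
the (well-founded) subexpression relation. -/
theorem acc_sr : ∀ x : Expr, Acc (fun a b => StepX b a) x → Acc SRr x := by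
  intro x hx
  induction hx with
  | intro x _ ih1 =>
    have key : ∀ n, ∀ y : Expr, sizeX y ≤ n → SubStar y x → Acc SRr y := by
      intro n
      induction n using Nat.strong_induction_on with
      | _ n ihn =>
        intro y hsz hsub
        constructor
        intro z hz
        rcases hz with hstep | hsubz
        · obtain ⟨x', hx', hsub'⟩ := substar_lift hsub hstep
          exact sr_descend (ih1 x' hx') hsub'
        · exact ihn (sizeX z) (by have := subx_size hsubz; omega) z le_rfl (.snoc hsub hsubz)
    exact key (sizeX x) x le_rfl (.refl x)

theorem acc_transGen {α : Sort*} {r : α → α → Prop} {a : α} (h : Acc r a) :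
    Acc (Relation.TransGen r) a := by
  induction h with
  | intro x _ ih =>
    constructor
    intro y hy
    cases hy with
    | single h => exact ih _ h
    | tail hyb hbx => exact (ih _ hbx).inv hyb

theorem accx_of_snt {t : STerm} (h : SNt t) : Acc (fun a b : Expr => StepX b a) (.inl t) := by
  induction h with
  | intro t _ ih =>
    constructor
    intro y hy
    cases hy with
    | t hs => exact ih _ hs

theorem accx_of_sne {e : SEnv} (h : SNe e) : Acc (fun a b : Expr => StepX b a) (.inr e) := by
  induction h with
  | intro e _ ih =>
    constructor
    intro y hy
    cases hy with
    | e hs => exact ih _ hs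

/-! basic transitive-chain builders -/

abbrev TG : Expr → Expr → Prop := Relation.TransGen SRr

theorem tg_stepT {t t' : STerm} (h : StepT t t') : TG (.inl t') (.inl t) :=
  .single (.inl (.t h))

theorem tg_stepE {e e' : SEnv} (h : StepE e e') : TG (.inr e') (.inr e) :=
  .single (.inl (.e h))

theorem tg_sub {y x : Expr} (h : SubX y x) : TG y x := .single (.inr h)

/-- preservation of SN along the environment closure. -/
theorem ce_sne {e z : SEnv} (he : SNe e) (h : CE e z) : SNe z := by
  induction h with
  | refl => exact he
  | step hx hs ih => exact ih.inv hs
  | tail hx ih => exact sne_cons_env ih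

/-- `CE` chains give transitive `SRr` chains. -/
theorem ce_tg {e z : SEnv} (h : CE e z) : z = e ∨ TG (.inr z) (.inr e) := by
  induction h with
  | refl => exact .inl rfl
  | step hx hs ih =>
      rcases ih with rfl | htg
      · exact .inr (tg_stepE hs)
      · exact .inr ((tg_stepE hs).trans htg)
  | tail hx ih =>
      rcases ih with heq | htg
      · exact .inr (heq ▸ tg_sub .consT)
      · exact .inr ((tg_sub .consT).trans htg)

theorem snt_star {t x : STerm} (h : SNt t) (hs : Relation.ReflTransGen StepT t x) : SNt x := by
  induction hs with
  | refl => exact h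
  | tail _ hstep ih => exact ih.inv hstep

theorem redstar_tg {t x : STerm} (hs : Relation.ReflTransGen StepT t x) :
    x = t ∨ TG (.inl x) (.inl t) := by
  induction hs with
  | refl => exact .inl rfl
  | tail hst hstep ih =>
      rcases ih with rfl | htg
      · exact .inr (tg_stepT hstep)
      · exact .inr ((tg_stepT hstep).trans htg)
/-! ## The main induction -/

theorem atomR_acc_nonvar {t : STerm} (hne : ∀ i, t ≠ .var i) :
    ∀ {ol nl : ℕ} {g : SEnv}, SNe g → Acc AtomR (.susp t ol nl g) := by
  intro ol nl g hg
  induction hg generalizing ol nl with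
  | intro g _ ih =>
    constructor
    intro y hy
    cases hy with
    | envC hs => exact ih _ hs
    | idx hlt hsn => exact absurd rfl (hne _)

/-- introduction rule for `TWOK` in terms of suspensions over reducts. -/
theorem TWOK_intro {u : STerm} (hu : SNt u)
    (H : ∀ x, Relation.ReflTransGen StepT u x →
      ∀ ol nl (ε : SEnv), TrivE ε → TWOK (.susp x ol nl ε)) : TWOK u := by
  have cover : ∀ z, TW u z → Relation.ReflTransGen StepT u z ∨
      ∃ x ol nl ε, Relation.ReflTransGen StepT u x ∧ TrivE ε ∧ TW (.susp x ol nl ε) z := by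
    intro z hz
    induction hz with
    | refl => exact .inl .refl
    | tower ol nl hx hε ih =>
        rcases ih with hred | ⟨x, ol', nl', ε', hred, hε', htw⟩
        · exact .inr ⟨_, ol, nl, _, hred, hε, .refl⟩
        · exact .inr ⟨x, ol', nl', ε', hred, hε', .tower ol nl htw hε⟩
    | step hx hs ih =>
        rcases ih with hred | ⟨x, ol', nl', ε', hred, hε', htw⟩
        · exact .inl (hred.tail hs)
        · exact .inr ⟨x, ol', nl', ε', hred, hε', .step htw hs⟩
  intro z hz
  rcases cover z hz with hred | ⟨x, ol, nl, ε, hred, hε, htw⟩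
  · exact snt_star hu hred
  · exact H x hred ol nl ε hε z htw

def GoalX : Expr → Prop
  | .inl t => SNt t → ∀ (ol nl : ℕ) (e : SEnv), SNe e → GOODS e → TWOK (.susp t ol nl e)
  | .inr e1 => SNe e1 → ∀ (nl1 ol2 : ℕ) (e2 : SEnv), SNe e2 → GOODS e2 →
      SNe (.merge e1 nl1 ol2 e2) ∧ GOODS (.merge e1 nl1 ol2 e2)

theorem grand : ∀ x : Expr, Acc (Relation.TransGen SRr) x → GoalX x := by
  intro x hx
  induction hx with
  | intro x _ IH =>
    cases x with
    | inr e1 =>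
        -- environment case
        intro he1 nl1 ol2 e2 he2 hge2
        have hge1 : GOODS e1 := by
          intro z hz
          refine ⟨ce_sne he1 hz, ?_⟩
          rintro s l x' rfl
          have hsns : SNt s := sne_cons_term (ce_sne he1 hz)
          have hchain : TG (.inl s) (.inr e1) := by
            rcases ce_tg hz with heq | htg
            · exact heq ▸ tg_sub .consH
            · exact (tg_sub .consH).trans htg
          refine TWOK_intro hsns ?_
          intro x hred ol nl ε hε
          have hchain2 : TG (.inl x) (.inr e1) := by
            rcases redstar_tg hred with heq | htg2
            · exact heq ▸ hchain
            · exact htg2.trans hchain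
          exact IH (.inl x) hchain2 (snt_star hsns hred) ol nl ε (triv_sne hε) (triv_GOODS hε)
        refine merge_goods hge1 hge2 ?_ nl1 ol2
        intro u k f' hcf g' hcg a b
        have hsnu : SNt u := sne_cons_term (ce_sne he1 hcf)
        have hchain : TG (.inl u) (.inr e1) := by
          rcases ce_tg hcf with heq | htg
          · exact heq ▸ tg_sub .consH
          · exact (tg_sub .consH).trans htg
        exact IH (.inl u) hchain hsnu a b g' (ce_sne he2 hcg) (hge2.of_CE hcg)
    | inl t =>
        intro ht ol nl e he hge
        cases t with
        | const c => exact twok_susp_const he hge c ol nl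
        | var i => exact twok_susp_var he hge i ol nl
        | app t1 t2 =>
            refine tower_machine
              (B := fun x => ∃ ol' nl' g, x = .susp (.app t1 t2) ol' nl' g ∧ SNe g ∧ GOODS g)
              (R := AtomR) ?_ ?_ ?_ ⟨ol, nl, e, rfl, he, hge⟩
            · rintro b ⟨ol', nl', g, rfl, h1, h2⟩
              exact atomR_acc_nonvar (fun i h => by cases h) h1
            · rintro b ⟨ol', nl', g, rfl, h1, h2⟩ y hy
              cases hy with
              | r5 =>
                  refine .inr (twok_app ?_ ?_)
                  · exact IH (.inl t1) (tg_sub .appL) (snt_app_left ht) ol' nl' g h1 h2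
                  · exact IH (.inl t2) (tg_sub .appR) (snt_app_right ht) ol' nl' g h1 h2
              | suspT _ t' _ _ _ hs =>
                  exact .inr (IH (.inl t') (tg_stepT hs) (ht.inv hs) ol' nl' g h1 h2)
              | suspE _ _ _ _ g' hs =>
                  exact .inl ⟨⟨ol', nl', g', rfl, h1.inv hs, h2.step hs⟩, .envC hs⟩
            · rintro b ⟨ol', nl', g, rfl, h1, h2⟩ olx nlx ε hε y hy
              cases hy with
              | suspT _ t' _ _ _ hs => exact .inl ⟨t', rfl, hs⟩
              | suspE _ _ _ _ ε' hs => exact .inr (.inl ⟨ε', rfl, hs⟩)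
              | m1 =>
                  exact .inr (.inr (.inl ⟨_, _, _, rfl,
                    (merge_triv_goods h2 hε nl' olx).1, (merge_triv_goods h2 hε nl' olx).2⟩))
        | lam W =>
            refine tower_machine
              (B := fun x => ∃ ol' nl' g, x = .susp (.lam W) ol' nl' g ∧ SNe g ∧ GOODS g)
              (R := AtomR) ?_ ?_ ?_ ⟨ol, nl, e, rfl, he, hge⟩
            · rintro b ⟨ol', nl', g, rfl, h1, h2⟩
              exact atomR_acc_nonvar (fun i h => by cases h) h1
            · rintro b ⟨ol', nl', g, rfl, h1, h2⟩ y hy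
              cases hy with
              | r6 =>
                  refine .inr (twok_lam ?_)
                  exact IH (.inl W) (tg_sub .lam) (snt_lam_inv ht) (ol'+1) (nl'+1)
                    (.cons (.var 1) (nl'+1) g) (sne_cons (snt_var 1) h1 _)
                    (goods_cons (triv_TWOK (.var 1)) h2 _)
              | suspT _ t' _ _ _ hs =>
                  exact .inr (IH (.inl t') (tg_stepT hs) (ht.inv hs) ol' nl' g h1 h2)
              | suspE _ _ _ _ g' hs =>
                  exact .inl ⟨⟨ol', nl', g', rfl, h1.inv hs, h2.step hs⟩, .envC hs⟩
            · rintro b ⟨ol', nl', g, rfl, h1, h2⟩ olx nlx ε hε y hy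
              cases hy with
              | suspT _ t' _ _ _ hs => exact .inl ⟨t', rfl, hs⟩
              | suspE _ _ _ _ ε' hs => exact .inr (.inl ⟨ε', rfl, hs⟩)
              | m1 =>
                  exact .inr (.inr (.inl ⟨_, _, _, rfl,
                    (merge_triv_goods h2 hε nl' olx).1, (merge_triv_goods h2 hε nl' olx).2⟩))
        | susp t1 ol1 nl1 e1 =>
            refine tower_machine
              (B := fun x => ∃ ol' nl' g, x = .susp (.susp t1 ol1 nl1 e1) ol' nl' g ∧
                SNe g ∧ GOODS g)
              (R := AtomR) ?_ ?_ ?_ ⟨ol, nl, e, rfl, he, hge⟩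
            · rintro b ⟨ol', nl', g, rfl, h1, h2⟩
              exact atomR_acc_nonvar (fun i h => by cases h) h1
            · rintro b ⟨ol', nl', g, rfl, h1, h2⟩ y hy
              cases hy with
              | m1 =>
                  have hmg := IH (.inr e1) (tg_sub .suspE) (snt_susp_env ht) nl1 ol' g h1 h2
                  refine .inr (IH (.inl t1) (tg_sub .suspT) (snt_susp_term ht)
                    _ _ _ hmg.1 hmg.2)
              | suspT _ t' _ _ _ hs =>
                  exact .inr (IH (.inl t') (tg_stepT hs) (ht.inv hs) ol' nl' g h1 h2)
              | suspE _ _ _ _ g' hs =>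
                  exact .inl ⟨⟨ol', nl', g', rfl, h1.inv hs, h2.step hs⟩, .envC hs⟩
            · rintro b ⟨ol', nl', g, rfl, h1, h2⟩ olx nlx ε hε y hy
              cases hy with
              | suspT _ t' _ _ _ hs => exact .inl ⟨t', rfl, hs⟩
              | suspE _ _ _ _ ε' hs => exact .inr (.inl ⟨ε', rfl, hs⟩)
              | m1 =>
                  exact .inr (.inr (.inl ⟨_, _, _, rfl,
                    (merge_triv_goods h2 hε nl' olx).1, (merge_triv_goods h2 hε nl' olx).2⟩))
/-! ## Final assembly -/

mutual
theorem main_T : ∀ t : STerm, SNt t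
  | .const c => snt_const c
  | .var i => snt_var i
  | .app t1 t2 => snt_app (main_T t1) (main_T t2)
  | .lam t => snt_lam (main_T t)
  | .susp t ol nl e => by
      have ht := main_T t
      have he := main_E e
      have h := grand (.inl t) (acc_transGen (acc_sr _ (accx_of_snt ht)))
      exact (h ht ol nl e he.1 he.2).snt
theorem main_E : ∀ e : SEnv, SNe e ∧ GOODS e
  | .nil => ⟨sne_nil, goods_nil⟩
  | .cons t n e => by
      have ht := main_T t
      have he := main_E e
      have htw : TWOK t := by
        refine TWOK_intro ht ?_
        intro x hred ol nl ε hε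
        have hx : SNt x := snt_star ht hred
        exact grand (.inl x) (acc_transGen (acc_sr _ (accx_of_snt hx)))
          hx ol nl ε (triv_sne hε) (triv_GOODS hε)
      exact ⟨sne_cons ht he.1 n, goods_cons htw he.2 n⟩
  | .merge e1 nl1 ol2 e2 => by
      have h1 := main_E e1
      have h2 := main_E e2
      exact grand (.inr e1) (acc_transGen (acc_sr _ (accx_of_sne h1.1)))
        h1.1 nl1 ol2 e2 h2.1 h2.2
end

theorem no_inf_chain {α : Type} {r : α → α → Prop} (f : ℕ → α)
    (hf : ∀ n, r (f n) (f (n+1))) (h : Acc (fun a b => r b a) (f 0)) : False := by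
  have key : ∀ a, Acc (fun x y => r y x) a → ∀ n, f n = a → False := by
    intro a ha
    induction ha with
    | intro a _ ih => rintro n rfl; exact ih (f (n+1)) (hf n) (n+1) rfl
  exact key _ h 0 rfl
/-- the reading and merging rules are terminating on well-formed
suspension expressions: there is no infinite rewriting sequence. -/
theorem stmt3 :
    (∀ f : ℕ → STerm, (f 0).wf → ¬ (∀ n, StepT (f n) (f (n + 1)))) ∧
    (∀ g : ℕ → SEnv, (g 0).wf → ¬ (∀ n, StepE (g n) (g (n + 1)))) := by
  constructor
  · intro f _ hstep
    exact no_inf_chain f hstep (main_T (f 0))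
  · intro g _ hstep
    exact no_inf_chain g hstep (main_E (g 0)).1
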